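/- Let R = F2[x^{±1}, y^{±1}] with involution f ↦ f̄, and define the 4×3 matrices over R: σ_F with columns (1; x), (1; y), (1; 1) written as pairs of 2×1 blocks (i.e. σ_F = ((1 1 1),(x y 1)) stacked), and σ̃ = (X̃ Z̃) where X̃ has top block T = (0, x^{-1}y; 1, 0) and bottom block I_2, and Z̃ has top block (1 + x^{-1}; 1 + y^{-1}) and bottom block 0. Then σ̃†λ_2 σ̃ = σ_F†σ_F, where λ_2 = (0 I_2; I_2 0) and † is the transpose with x ↦ x^{-1}, y ↦ y^{-1} applied entrywise. -/

import Mathlib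

/-- The Laurent polynomial ring `F₂[x^{±1}, y^{±1}]` in two variables. -/
abbrev R2 : Type := AddMonoidAlgebra (ZMod 2) (Fin 2 → ℤ)

/-- The monomial `x^a y^b`. -/
noncomputable def m2 (a b : ℤ) : R2 := AddMonoidAlgebra.single ![a, b] 1

/-- The involution `f ↦ f̄` given by `x ↦ x⁻¹`, `y ↦ y⁻¹`. -/
noncomputable def bar2 : R2 ≃ₐ[ZMod 2] R2 :=
  AddMonoidAlgebra.domCongr (ZMod 2) (ZMod 2) (AddEquiv.neg (Fin 2 → ℤ))

/-- The matrix adjoint `A†`: transpose with the involution applied entrywise. -/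
noncomputable def adj {m n : Type*} (A : Matrix m n R2) : Matrix n m R2 :=
  (A.map bar2).transpose

/-! `σ̃ = ((T Z); (I 0))` gives `σ̃† λ₂ σ̃ = ((T + T†, Z); (Z†, 0))`, while `σ_F = ((A 1); (B 1))`
gives `σ_F† σ_F = ((A†A + B†B, A† + B†); (A + B, 0))` in characteristic 2. So the identity
reduces to `Z = A† + B†` and `T + T† = A†A + B†B`; both sides of the latter are
`((0, 1 + x⁻¹y); (1 + xy⁻¹, 0))`, because `x̄x = ȳy = 1` cancels the diagonal of `A†A`. -/

instance : CharP R2 2 := charP_of_injective_algebraMap' (ZMod 2) 2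

lemma m2_mul (a b c d : ℤ) : m2 a b * m2 c d = m2 (a + c) (b + d) := by
  simp [m2, AddMonoidAlgebra.single_mul_single]

lemma m2_zero_zero : m2 0 0 = 1 := by
  rw [m2, AddMonoidAlgebra.one_def]
  congr 1
  ext i
  fin_cases i <;> rfl

lemma bar2_m2 (a b : ℤ) : bar2 (m2 a b) = m2 (-a) (-b) := by
  simp [bar2, m2, AddMonoidAlgebra.domCongr_single]

lemma bar2_symm : bar2.symm = bar2 := rfl

lemma bar2_bar2 (f : R2) : bar2 (bar2 f) = f := by
  nth_rewrite 1 [← bar2_symm]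
  exact bar2.symm_apply_apply f

lemma Matrix.one_add_one_eq_zero_of_charTwo {n α : Type*} [DecidableEq n] [Semiring α]
    [CharP α 2] : (1 : Matrix n n α) + 1 = 0 := by
  ext i j
  by_cases h : i = j <;> simp [h, CharTwo.add_self_eq_zero]

section adj

variable {l m n o : Type*}

lemma adj_adj (A : Matrix m n R2) : adj (adj A) = A := by
  ext i j
  simp [adj, bar2_bar2]

lemma adj_zero : adj (0 : Matrix m n R2) = 0 := by
  simp [adj]

lemma adj_one [DecidableEq n] : adj (1 : Matrix n n R2) = 1 := by
  simp [adj]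

lemma adj_add (A B : Matrix m n R2) : adj (A + B) = adj A + adj B := by
  simp [adj, Matrix.map_add]

lemma adj_fromBlocks (A : Matrix m l R2) (B : Matrix m n R2) (C : Matrix o l R2)
    (D : Matrix o n R2) :
    adj (Matrix.fromBlocks A B C D) = Matrix.fromBlocks (adj A) (adj C) (adj B) (adj D) := by
  rw [adj, Matrix.fromBlocks_map, Matrix.fromBlocks_transpose]
  rfl

variable [DecidableEq n] [Fintype n]

lemma adj_fromBlocks_mul_swap_mul [Fintype m] (T : Matrix n n R2) (Z : Matrix n m R2) :
    adj (Matrix.fromBlocks T Z 1 0 : Matrix (n ⊕ n) (n ⊕ m) R2) *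
        (Matrix.fromBlocks 0 1 1 0 : Matrix (n ⊕ n) (n ⊕ n) R2) * Matrix.fromBlocks T Z 1 0 =
      Matrix.fromBlocks (adj T + T) Z (adj Z) 0 := by
  -- the outer product elaborates through `CStarMatrix`'s `HMul`, which `rw` cannot see through
  refine (Matrix.mul_assoc _ _ _).trans ?_
  rw [Matrix.fromBlocks_multiply, adj_fromBlocks, adj_one, adj_zero, Matrix.fromBlocks_multiply]
  simp [add_comm]

lemma adj_fromBlocks_one_mul_self (A B : Matrix n m R2) :
    adj (Matrix.fromBlocks A 1 B 1 : Matrix (n ⊕ n) (m ⊕ n) R2) * Matrix.fromBlocks A 1 B 1 =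
      Matrix.fromBlocks (adj A * A + adj B * B) (adj A + adj B) (A + B) 0 := by
  simp [adj_fromBlocks, adj_one, Matrix.fromBlocks_multiply, Matrix.one_add_one_eq_zero_of_charTwo]

end adj

/-- The 2D exact bosonization preserves all commutation relations: with
`σ_F = ((1 1 1); (x y 1))` and `σ̃ = (X̃ Z̃)`, `X̃ = ((0 x⁻¹y; 1 0); I₂)`,
`Z̃ = ((1+x⁻¹; 1+y⁻¹); 0)`, one has `σ̃† λ₂ σ̃ = σ_F† σ_F`. -/
theorem stmt_19
    (σF : Matrix (Fin 1 ⊕ Fin 1) (Fin 2 ⊕ Fin 1) R2)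
    (hσF : σF = Matrix.fromBlocks !![1, 1] 1 !![m2 1 0, m2 0 1] 1)
    (T : Matrix (Fin 2) (Fin 2) R2)
    (hT : T = !![0, m2 (-1) 1; 1, 0])
    (Ztop : Matrix (Fin 2) (Fin 1) R2)
    (hZtop : Ztop = !![1 + m2 (-1) 0; 1 + m2 0 (-1)])
    (σt : Matrix (Fin 2 ⊕ Fin 2) (Fin 2 ⊕ Fin 1) R2)
    (hσt : σt = Matrix.fromBlocks T Ztop 1 0)
    (lam2 : Matrix (Fin 2 ⊕ Fin 2) (Fin 2 ⊕ Fin 2) R2)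
    (hlam2 : lam2 = Matrix.fromBlocks 0 1 1 0) :
    adj σt * lam2 * σt = adj σF * σF := by
  subst hσF hσt hlam2
  have hZtop_eq : Ztop = adj !![(1 : R2), 1] + adj !![m2 1 0, m2 0 1] := by
    subst hZtop
    ext i j
    fin_cases i <;> fin_cases j <;> simp [adj, bar2_m2]
  have hT_add : adj T + T =
      adj !![(1 : R2), 1] * !![(1 : R2), 1] + adj !![m2 1 0, m2 0 1] * !![m2 1 0, m2 0 1] := by
    subst hT
    ext i j
    fin_cases i <;> fin_cases j <;>
      simp [adj, Matrix.mul_apply, bar2_m2, m2_mul, m2_zero_zero, CharTwo.add_self_eq_zero, add_comm]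
  calc _ = Matrix.fromBlocks (adj T + T) Ztop (adj Ztop) 0 := adj_fromBlocks_mul_swap_mul T Ztop
    _ = Matrix.fromBlocks _ _ _ 0 := by rw [hT_add, hZtop_eq, adj_add, adj_adj, adj_adj]
    _ = _ := (adj_fromBlocks_one_mul_self _ _).symm
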